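/- For all positive integers n, k, every partition α with at most k parts each at most n, and every i with 1 ≤ i ≤ n, the multiset of leg lengths l_T(x) over cells x of T with arm length a_T(x) = i−1 equals the multiset of leg lengths l_{T*}(x) over cells x of T* with arm length a_{T*}(x) = i−1. -/

import Mathlib

/-- The skew diagram with rows `a,…,b`, where row `i` contains the cells
`(i,j)` for `lo i ≤ j ≤ hi i`. -/
def skewD (a b : ℕ) (lo hi : ℕ → ℕ) : Finset (ℕ × ℕ) :=
  (Finset.Icc a b).biUnion fun i => (Finset.Icc (lo i) (hi i)).image fun j => (i, j)

/-- Arm length: number of cells of `G` in the same row, strictly to the right. -/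
def arm (G : Finset (ℕ × ℕ)) (x : ℕ × ℕ) : ℕ :=
  (G.filter fun y => y.1 = x.1 ∧ x.2 < y.2).card

/-- Leg length: number of cells of `G` in the same column, strictly below
(rows are numbered bottom to top). -/
def leg (G : Finset (ℕ × ℕ)) (x : ℕ × ℕ) : ℕ :=
  (G.filter fun y => y.2 = x.2 ∧ y.1 < x.1).card

/-- Multiset of arm–leg pairs of the cells of `E`, computed in `G`. -/
def AL (G E : Finset (ℕ × ℕ)) : Multiset (ℕ × ℕ) :=
  E.val.map fun x => (arm G x, leg G x)

/-- Multiset of hook lengths of `G`. -/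
def hookMS (G : Finset (ℕ × ℕ)) : Multiset ℕ :=
  G.val.map fun x => arm G x + leg G x + 1

/-- The skew diagram `T`. -/
def TT (n k : ℕ) (α : ℕ → ℕ) : Finset (ℕ × ℕ) :=
  skewD 1 k (fun i => α 1 - α i + 1) (fun i => n + α 1 - α i)

/-- The skew diagram `V`. -/
def VV (n k : ℕ) (α : ℕ → ℕ) : Finset (ℕ × ℕ) :=
  skewD (k + 1) (2 * k) (fun i => n + α 1 - α (i - k) + 1) (fun _ => n + α 1)

/-- The skew diagram `SQ = T ∪ V`. -/
def SQ (n k : ℕ) (α : ℕ → ℕ) : Finset (ℕ × ℕ) :=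
  TT n k α ∪ VV n k α

/-- The `k × n` rectangle `R`. -/
def RR (n k : ℕ) : Finset (ℕ × ℕ) :=
  skewD 1 k (fun _ => 1) (fun _ => n)

/-- The Young diagram `D` of `α`. -/
def DD (k : ℕ) (α : ℕ → ℕ) : Finset (ℕ × ℕ) :=
  skewD 1 k (fun _ => 1) (fun i => α (k + 1 - i))

/-- The 180° rotation `T*` of `T`. -/
def Tstar (n k : ℕ) (α : ℕ → ℕ) : Finset (ℕ × ℕ) :=
  skewD 1 k (fun i => α (k + 1 - i) - α k + 1) (fun i => n + α (k + 1 - i) - α k)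

/-!
Both diagrams are stacks of `k` rows of length `n`, row `r` shifted to the right by a weakly
increasing amount `β r` (`α₁ - α_r` for `T`, `α_{k+1-r} - α_k` for `T*`). The cell of arm `c` in
row `r` is in column `n + β r - c`, and its leg counts the rows `r' < r` with `β r ≤ β r' + c`.
For `T` this is the in-degree of `r` in the graph on `{1, …, k}` whose edges are the pairs
`r' < r` with `α_{r'} ≤ α_r + c`; for `T*`, after the reflection `r ↦ k + 1 - r`, it is the
out-degree in the same graph. An edge `(a, b)` forces every pair nested in `[a, b]` to be an edge,
so the in-degree of `b` is `≥ m` iff `(b - m, b)` is an edge and the out-degree of `a` is `≥ m`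
iff `(a, a + m)` is one: both degree multisets have the same number of entries `≥ m` for every `m`.
-/

open Finset

theorem Multiset.eq_of_forall_card_filter_le_eq {s t : Multiset ℕ}
    (h : ∀ m, card (s.filter (m ≤ ·)) = card (t.filter (m ≤ ·))) : s = t := by
  have tail (u : Multiset ℕ) (a : ℕ) :
      card (u.filter (a ≤ ·)) = u.count a + card (u.filter (a + 1 ≤ ·)) := by
    have hsplit := filter_add_filter (a = ·) (a + 1 ≤ ·) u
    have hor : u.filter (fun x => a = x ∨ a + 1 ≤ x) = u.filter (a ≤ ·) :=
      filter_congr fun x _ => by omega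
    have hand : u.filter (fun x => a = x ∧ a + 1 ≤ x) = 0 := filter_eq_nil.2 fun x _ => by omega
    rw [hor, hand, add_zero] at hsplit
    rw [← hsplit, card_add, count_eq_card_filter_eq]
  ext a
  have := h a; have := h (a + 1); have := tail s a; have := tail t a
  omega

section Degrees

variable (k : ℕ) (R : ℕ → ℕ → Prop) [DecidableRel R]

def inDegrees : Multiset ℕ :=
  (Icc 1 k).val.map fun b => #{a ∈ Icc 1 k | a < b ∧ R a b}

def outDegrees : Multiset ℕ :=
  (Icc 1 k).val.map fun a => #{b ∈ Icc 1 k | a < b ∧ R a b}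

def ClosedUnderNesting : Prop :=
  ∀ a a' b' b, 1 ≤ a → a ≤ a' → a' < b' → b' ≤ b → b ≤ k → R a b → R a' b'

variable {k R}

theorem le_inDegree_iff (hR : ClosedUnderNesting k R) {m b : ℕ} (hm : 1 ≤ m) (hb : b ∈ Icc 1 k) :
    m ≤ #{a ∈ Icc 1 k | a < b ∧ R a b} ↔ m < b ∧ R (b - m) b := by
  rw [mem_Icc] at hb
  constructor
  · intro hcard
    by_contra hfar
    have hsub : {a ∈ Icc 1 k | a < b ∧ R a b} ⊆ Ioo (b - m) b := by
      intro a ha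
      simp only [mem_filter, mem_Icc, mem_Ioo] at ha ⊢
      refine ⟨?_, ha.2.1⟩
      by_contra hle
      exact hfar ⟨by omega, hR a (b - m) b b ha.1.1 (by omega) (by omega) le_rfl hb.2 ha.2.2⟩
    have := card_le_card hsub
    rw [Nat.card_Ioo] at this
    omega
  · rintro ⟨hmb, hRb⟩
    have hsub : Ico (b - m) b ⊆ {a ∈ Icc 1 k | a < b ∧ R a b} := by
      intro a ha
      simp only [mem_filter, mem_Icc, mem_Ico] at ha ⊢
      exact ⟨⟨by omega, by omega⟩, ha.2,
        hR (b - m) a b b (by omega) ha.1 ha.2 le_rfl hb.2 hRb⟩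
    have := card_le_card hsub
    rwa [Nat.card_Ico, Nat.sub_sub_self hmb.le] at this

theorem le_outDegree_iff (hR : ClosedUnderNesting k R) {m a : ℕ} (hm : 1 ≤ m) (ha : a ∈ Icc 1 k) :
    m ≤ #{b ∈ Icc 1 k | a < b ∧ R a b} ↔ a + m ≤ k ∧ R a (a + m) := by
  rw [mem_Icc] at ha
  constructor
  · intro hcard
    by_contra hfar
    have hsub : {b ∈ Icc 1 k | a < b ∧ R a b} ⊆ Ioo a (a + m) := by
      intro b hb
      simp only [mem_filter, mem_Icc, mem_Ioo] at hb ⊢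
      refine ⟨hb.2.1, ?_⟩
      by_contra hle
      exact hfar ⟨by omega, hR a a (a + m) b ha.1 le_rfl (by omega) (by omega) hb.1.2 hb.2.2⟩
    have := card_le_card hsub
    rw [Nat.card_Ioo] at this
    omega
  · rintro ⟨hmk, hRa⟩
    have hsub : Ioc a (a + m) ⊆ {b ∈ Icc 1 k | a < b ∧ R a b} := by
      intro b hb
      simp only [mem_filter, mem_Icc, mem_Ioc] at hb ⊢
      exact ⟨⟨by omega, by omega⟩, hb.1,
        hR a a b (a + m) ha.1 le_rfl hb.1 hb.2 hmk hRa⟩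
    have := card_le_card hsub
    rwa [Nat.card_Ioc, Nat.add_sub_cancel_left] at this

theorem inDegrees_eq_outDegrees (hR : ClosedUnderNesting k R) :
    inDegrees k R = outDegrees k R := by
  refine Multiset.eq_of_forall_card_filter_le_eq fun m => ?_
  rcases Nat.eq_zero_or_pos m with rfl | hm
  · simp [inDegrees, outDegrees]
  simp only [inDegrees, outDegrees, Multiset.filter_map, Multiset.card_map, Function.comp_def,
    ← filter_val, card_val]
  rw [filter_congr fun b hb => le_inDegree_iff hR hm hb,
    filter_congr fun a ha => le_outDegree_iff hR hm ha]
  refine card_nbij' (· - m) (· + m) ?_ ?_ ?_ ?_ <;> intro x hx <;>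
    simp only [coe_filter, mem_Icc, Set.mem_ofPred_eq] at hx ⊢
  · refine ⟨⟨by omega, by omega⟩, by omega, ?_⟩
    rw [Nat.sub_add_cancel hx.2.1.le]
    exact hx.2.2
  · refine ⟨⟨by omega, by omega⟩, by omega, ?_⟩
    rw [Nat.add_sub_cancel]
    exact hx.2.2
  · omega
  · omega

end Degrees

theorem map_Icc_val_reflect (k : ℕ) :
    (Icc 1 k).val.map (fun r => k + 1 - r) = (Icc 1 k).val := by
  rw [← image_val_of_injOn fun a ha b hb (hab : k + 1 - a = k + 1 - b) => by
    simp only [coe_Icc, Set.mem_Icc] at ha hb; omega]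
  congr 1
  ext r
  simp only [mem_image, mem_Icc]
  exact ⟨fun ⟨s, hs, hsr⟩ => by omega, fun hr => ⟨k + 1 - r, by omega, by omega⟩⟩

theorem inDegrees_eq_outDegrees_of_reflect {k : ℕ} {S R : ℕ → ℕ → Prop}
    [DecidableRel S] [DecidableRel R]
    (h : ∀ a ∈ Icc 1 k, ∀ b ∈ Icc 1 k, S a b ↔ R (k + 1 - b) (k + 1 - a)) :
    inDegrees k S = outDegrees k R := by
  rw [inDegrees, ← map_Icc_val_reflect k, Multiset.map_map, outDegrees]
  refine Multiset.map_congr rfl fun a ha => ?_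
  rw [Finset.mem_val, mem_Icc] at ha
  refine card_nbij' (k + 1 - ·) (k + 1 - ·) ?_ ?_ ?_ ?_ <;> intro x hx <;>
    simp only [coe_filter, mem_Icc, Set.mem_ofPred_eq] at hx ⊢
  · refine ⟨⟨by omega, by omega⟩, by omega, ?_⟩
    have hR := (h x (mem_Icc.2 hx.1) _ (mem_Icc.2 ⟨by omega, by omega⟩)).1 hx.2.2
    rwa [Nat.sub_sub_self (by omega : a ≤ k + 1)] at hR
  · refine ⟨⟨by omega, by omega⟩, by omega, ?_⟩
    rw [h _ (mem_Icc.2 ⟨by omega, by omega⟩) _ (mem_Icc.2 ⟨by omega, by omega⟩),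
      Nat.sub_sub_self (by omega : a ≤ k + 1), Nat.sub_sub_self (by omega : x ≤ k + 1)]
    exact hx.2.2
  · omega
  · omega

theorem inDegrees_eq_outDegrees_of_monotoneOn {k : ℕ} {β : ℕ → ℕ}
    (hβ : MonotoneOn β (Set.Icc 1 k)) (c : ℕ) :
    inDegrees k (fun a b => β b ≤ β a + c) = outDegrees k (fun a b => β b ≤ β a + c) :=
  inDegrees_eq_outDegrees fun a a' b' b ha haa' hab' hb'b hb hR =>
    calc β b' ≤ β b := hβ ⟨by omega, by omega⟩ ⟨by omega, hb⟩ hb'b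
      _ ≤ β a + c := hR
      _ ≤ β a' + c := by gcongr; exact hβ ⟨ha, by omega⟩ ⟨by omega, by omega⟩ haa'

section SkewDiagram

variable {a b : ℕ} {lo hi : ℕ → ℕ}

theorem mem_skewD {x : ℕ × ℕ} :
    x ∈ skewD a b lo hi ↔ a ≤ x.1 ∧ x.1 ≤ b ∧ lo x.1 ≤ x.2 ∧ x.2 ≤ hi x.1 := by
  simp only [skewD, mem_biUnion, mem_image, mem_Icc]
  constructor
  · rintro ⟨i, ⟨h1, h2⟩, j, ⟨h3, h4⟩, rfl⟩
    exact ⟨h1, h2, h3, h4⟩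
  · rintro ⟨h1, h2, h3, h4⟩
    exact ⟨x.1, ⟨h1, h2⟩, x.2, ⟨h3, h4⟩, rfl⟩

theorem arm_skewD {x : ℕ × ℕ} (hx : x ∈ skewD a b lo hi) :
    arm (skewD a b lo hi) x = hi x.1 - x.2 := by
  rw [mem_skewD] at hx
  rw [arm, ← Nat.card_Ioc]
  refine card_nbij' Prod.snd (fun j => (x.1, j)) ?_ ?_ ?_ ?_ <;> intro y hy <;>
    simp only [coe_filter, coe_Ioc, mem_skewD, Set.mem_ofPred_eq, Set.mem_Ioc] at hy ⊢
  · exact ⟨hy.2.2, hy.2.1 ▸ hy.1.2.2.2⟩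
  · exact ⟨⟨hx.1, hx.2.1, by omega, hy.2⟩, trivial, hy.1⟩
  · exact Prod.ext hy.2.1.symm rfl

theorem leg_skewD (x : ℕ × ℕ) :
    leg (skewD a b lo hi) x = #{r ∈ Icc a b | r < x.1 ∧ lo r ≤ x.2 ∧ x.2 ≤ hi r} := by
  rw [leg]
  refine card_nbij' Prod.fst (fun r => (r, x.2)) ?_ ?_ ?_ ?_ <;> intro y hy <;>
    simp only [coe_filter, mem_skewD, mem_Icc, Set.mem_ofPred_eq] at hy ⊢
  · exact ⟨⟨hy.1.1, hy.1.2.1⟩, hy.2.2, hy.2.1 ▸ hy.1.2.2.1, hy.2.1 ▸ hy.1.2.2.2⟩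
  · exact ⟨⟨hy.1.1, hy.1.2, hy.2.2.1, hy.2.2.2⟩, trivial, hy.2.1⟩
  · exact Prod.ext rfl hy.2.1.symm

theorem filter_arm_skewD {c : ℕ} (h : ∀ r ∈ Icc a b, lo r + c ≤ hi r) :
    {x ∈ skewD a b lo hi | arm (skewD a b lo hi) x = c} =
      (Icc a b).map ⟨fun r => (r, hi r - c), (Function.LeftInverse.injective (g := Prod.fst)
        fun _ => rfl)⟩ := by
  ext x
  simp only [mem_filter, mem_map, mem_Icc, Function.Embedding.coeFn_mk]
  constructor
  · rintro ⟨hx, harm⟩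
    rw [arm_skewD hx] at harm
    rw [mem_skewD] at hx
    exact ⟨x.1, ⟨hx.1, hx.2.1⟩, Prod.ext rfl (by dsimp only; omega)⟩
  · rintro ⟨r, hr, rfl⟩
    have := h r (mem_Icc.2 hr)
    have hx : (r, hi r - c) ∈ skewD a b lo hi :=
      mem_skewD.2 ⟨hr.1, hr.2, by dsimp only; omega, by dsimp only; omega⟩
    refine ⟨hx, ?_⟩
    rw [arm_skewD hx]
    dsimp only
    omega

end SkewDiagram

def legsOfArm (G : Finset (ℕ × ℕ)) (c : ℕ) : Multiset ℕ :=
  {x ∈ G | arm G x = c}.val.map (leg G)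

theorem legsOfArm_skewD_eq_inDegrees {k n c : ℕ} {β hi : ℕ → ℕ}
    (hβ : MonotoneOn β (Set.Icc 1 k)) (hhi : ∀ r ∈ Icc 1 k, hi r = n + β r) (hc : c < n) :
    legsOfArm (skewD 1 k (fun r => β r + 1) hi) c =
      inDegrees k (fun a b => β b ≤ β a + c) := by
  rw [legsOfArm, filter_arm_skewD fun r hr => by rw [hhi r hr]; omega, map_val,
    Multiset.map_map, inDegrees]
  refine Multiset.map_congr rfl fun r hr => ?_
  rw [Function.comp_apply, Function.Embedding.coeFn_mk, leg_skewD]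
  congr 1
  refine filter_congr fun r' hr' => ?_
  have hmono : r' < r → β r' ≤ β r := fun h =>
    hβ (coe_Icc 1 k ▸ hr') (coe_Icc 1 k ▸ hr) h.le
  rw [hhi r hr, hhi r' hr']
  constructor
  · rintro ⟨hlt, -, hle⟩
    exact ⟨hlt, by omega⟩
  · rintro ⟨hlt, hle⟩
    have := hmono hlt
    exact ⟨hlt, by omega, by omega⟩

theorem legs_T_eq_legs_Tstar_general (n k : ℕ) (α : ℕ → ℕ)
    (hmono : ∀ i j, 1 ≤ i → i ≤ j → j ≤ k → α j ≤ α i)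
    (i : ℕ) (hi1 : 1 ≤ i) (hin : i ≤ n) :
    (((TT n k α).filter fun x => arm (TT n k α) x = i - 1).val.map
      fun x => leg (TT n k α) x) =
    (((Tstar n k α).filter fun x => arm (Tstar n k α) x = i - 1).val.map
      fun x => leg (Tstar n k α) x) := by
  have hc : i - 1 < n := by omega
  have hanti : AntitoneOn α (Set.Icc 1 k) := fun a ha b hb hab => hmono a b ha.1 hab hb.2
  have hbounds : ∀ r ∈ Icc 1 k, α k ≤ α r ∧ α r ≤ α 1 := fun r hr => by
    rw [mem_Icc] at hr
    exact ⟨hmono r k hr.1 hr.2 le_rfl, hmono 1 r le_rfl hr.1 hr.2⟩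
  have hreflect : ∀ r ∈ Icc 1 k, k + 1 - r ∈ Icc 1 k := fun r hr => by
    rw [mem_Icc] at hr ⊢
    omega
  have hmonoT : MonotoneOn (fun r => α 1 - α r) (Set.Icc 1 k) :=
    fun a ha b hb hab => Nat.sub_le_sub_left (hanti ha hb hab) _
  have hmonoS : MonotoneOn (fun r => α (k + 1 - r) - α k) (Set.Icc 1 k) := by
    rintro a ⟨ha1, hak⟩ b ⟨hb1, hbk⟩ hab
    exact Nat.sub_le_sub_right (hanti ⟨by omega, by omega⟩ ⟨by omega, by omega⟩ (by omega)) _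
  change legsOfArm (TT n k α) (i - 1) = legsOfArm (Tstar n k α) (i - 1)
  calc legsOfArm (TT n k α) (i - 1)
      = inDegrees k (fun a b => α 1 - α b ≤ α 1 - α a + (i - 1)) :=
        legsOfArm_skewD_eq_inDegrees (hi := fun r => n + α 1 - α r) hmonoT
          (fun r hr => by have := hbounds r hr; omega) hc
    _ = outDegrees k (fun a b => α 1 - α b ≤ α 1 - α a + (i - 1)) :=
        inDegrees_eq_outDegrees_of_monotoneOn hmonoT (i - 1)
    _ = inDegrees k (fun a b => α (k + 1 - b) - α k ≤ α (k + 1 - a) - α k + (i - 1)) :=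
        (inDegrees_eq_outDegrees_of_reflect fun a ha b hb => by
          have := hbounds _ (hreflect a ha); have := hbounds _ (hreflect b hb); omega).symm
    _ = legsOfArm (Tstar n k α) (i - 1) :=
        (legsOfArm_skewD_eq_inDegrees (hi := fun r => n + α (k + 1 - r) - α k) hmonoS
          (fun r hr => by have := hbounds _ (hreflect r hr); omega) hc).symm

/-- For each `i`, the multiset of leg lengths of the cells of `T` with arm
length `i−1` equals the multiset of leg lengths of the cells of `T*` with arm
length `i−1`. -/
theorem legs_T_eq_legs_Tstar (n k : ℕ) (α : ℕ → ℕ) (hn : 0 < n) (hk : 0 < k)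
    (hα1 : α 1 ≤ n) (hmono : ∀ i j, 1 ≤ i → i ≤ j → j ≤ k → α j ≤ α i)
    (i : ℕ) (hi1 : 1 ≤ i) (hin : i ≤ n) :
    (((TT n k α).filter fun x => arm (TT n k α) x = i - 1).val.map
      fun x => leg (TT n k α) x) =
    (((Tstar n k α).filter fun x => arm (Tstar n k α) x = i - 1).val.map
      fun x => leg (Tstar n k α) x) :=
  legs_T_eq_legs_Tstar_general n k α hmono i hi1 hin
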